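/- arXiv:math/0701481 — 6 statements merged into one kernel-verified Lean document; each statement's English description precedes it below -/
import Mathlib

section
/- If f : ℝ → ℝ is continuous and the preimage of every closed interval under f is an interval, then f is monotone. -/
/-- If `f : ℝ → ℝ` is continuous and the preimage of every closed interval is
order-convex (an interval), then `f` is monotone. -/
theorem stmt_1 (f : ℝ → ℝ) (hf : Continuous f)
    (h : ∀ a b : ℝ, a ≤ b → (f ⁻¹' Set.Icc a b).OrdConnected) :
    Monotone f ∨ Antitone f := by
  have key : ∀ u v w : ℝ, u ≤ v → v ≤ w →
      min (f u) (f w) ≤ f v ∧ f v ≤ max (f u) (f w) := by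
    intro u v w huv hvw
    have hu : u ∈ f ⁻¹' Set.Icc (min (f u) (f w)) (max (f u) (f w)) :=
      ⟨min_le_left _ _, le_max_left _ _⟩
    have hw : w ∈ f ⁻¹' Set.Icc (min (f u) (f w)) (max (f u) (f w)) :=
      ⟨min_le_right _ _, le_max_right _ _⟩
    exact (h _ _ (min_le_max)).out hu hw ⟨huv, hvw⟩
  by_contra hc
  push_neg at hc
  obtain ⟨hm, ha⟩ := hc
  simp only [Monotone, Antitone, not_forall, not_le] at hm ha
  obtain ⟨a, b, hab, hba⟩ := hm
  obtain ⟨c, d, hcd, hdc⟩ := ha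
  set s := min a c with hs
  set t := max b d with ht
  have hsa : s ≤ a := min_le_left _ _
  have hsc : s ≤ c := min_le_right _ _
  have hbt : b ≤ t := le_max_left _ _
  have hdt : d ≤ t := le_max_right _ _
  -- f a > f b branch gives f s ≥ f a and f b ≥ f t
  have k1 := key s a b hsa hab
  have k2 := key a b t hab hbt
  have k3 := key s c d hsc hcd
  have k4 := key c d t hcd hdt
  have h1 : f a ≤ f s := by
    rcases max_cases (f s) (f b) with ⟨he, _⟩ | ⟨he, _⟩ <;> rw [he] at k1 <;> linarith [k1.2]
  have h2 : f t ≤ f b := by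
    rcases min_cases (f a) (f t) with ⟨he, _⟩ | ⟨he, _⟩ <;> rw [he] at k2 <;> linarith [k2.1]
  have h3 : f s ≤ f c := by
    rcases min_cases (f s) (f d) with ⟨he, _⟩ | ⟨he, _⟩ <;> rw [he] at k3 <;> linarith [k3.1]
  have h4 : f d ≤ f t := by
    rcases max_cases (f c) (f t) with ⟨he, _⟩ | ⟨he, _⟩ <;> rw [he] at k4 <;> linarith [k4.2]
  linarith
end

section
/- If a² + b² > c² where a = ‖p₁ − p₂‖, b = ‖p₂ − p₃‖, c = ‖p₁ − p₃‖ for points p₁, p₂, p₃ in a real inner product space, then there exists a closed ball of radius c/2 containing p₁ and p₃ but not p₂, and no ball of smaller radius than c/2 contains both p₁ and p₃. -/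
/-- If `a² + b² > c²`, there is a ball of radius `c/2` containing `p₁` and `p₃` but
not `p₂`, and no ball of smaller radius contains both `p₁` and `p₃`. -/
theorem stmt_7 {E : Type*} [NormedAddCommGroup E] [InnerProductSpace ℝ E]
    (p₁ p₂ p₃ : E)
    (h : ‖p₁ - p₂‖ ^ 2 + ‖p₂ - p₃‖ ^ 2 > ‖p₁ - p₃‖ ^ 2) :
    (∃ ctr : E, p₁ ∈ Metric.closedBall ctr (‖p₁ - p₃‖ / 2) ∧
        p₃ ∈ Metric.closedBall ctr (‖p₁ - p₃‖ / 2) ∧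
        p₂ ∉ Metric.closedBall ctr (‖p₁ - p₃‖ / 2)) ∧
    ∀ (ctr : E) (R : ℝ), R < ‖p₁ - p₃‖ / 2 →
      ¬(p₁ ∈ Metric.closedBall ctr R ∧ p₃ ∈ Metric.closedBall ctr R) := by
  constructor
  · refine ⟨midpoint ℝ p₁ p₃, ?_, ?_, ?_⟩
    · rw [Metric.mem_closedBall, dist_left_midpoint, dist_eq_norm]
      simp
      linarith
    · rw [Metric.mem_closedBall, dist_right_midpoint, dist_comm, dist_eq_norm]
      simp
      rw [norm_sub_rev]
      linarith
    · rw [Metric.mem_closedBall, not_le, dist_eq_norm]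
      have key : p₂ - midpoint ℝ p₁ p₃ = (2:ℝ)⁻¹ • ((p₂ - p₁) + (p₂ - p₃)) := by
        rw [midpoint_eq_smul_add, invOf_eq_inv]
        module
      have par := parallelogram_law_with_norm ℝ (p₂ - p₁) (p₂ - p₃)
      have h13 : (p₂ - p₁) - (p₂ - p₃) = p₃ - p₁ := by abel
      rw [h13] at par
      have e1 : ‖p₃ - p₁‖ = ‖p₁ - p₃‖ := norm_sub_rev _ _
      have e2 : ‖p₂ - p₁‖ = ‖p₁ - p₂‖ := norm_sub_rev _ _
      have par2 : ‖(p₂ - p₁) + (p₂ - p₃)‖ ^ 2 + ‖p₁ - p₃‖ ^ 2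
          = 2 * (‖p₁ - p₂‖ ^ 2 + ‖p₂ - p₃‖ ^ 2) := by
        rw [← e1, ← e2]; ring_nf; ring_nf at par; linarith
      have hn : ‖p₂ - midpoint ℝ p₁ p₃‖ = ‖(p₂ - p₁) + (p₂ - p₃)‖ / 2 := by
        rw [key, norm_smul]
        simp
        ring
      rw [hn]
      have hsq : (‖p₁ - p₃‖ / 2) ^ 2 < (‖(p₂ - p₁) + (p₂ - p₃)‖ / 2) ^ 2 := by
        nlinarith [par2, h]
      have h1 : 0 ≤ ‖p₁ - p₃‖ / 2 := by positivity
      have h2 : 0 ≤ ‖(p₂ - p₁) + (p₂ - p₃)‖ / 2 := by positivity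
      nlinarith [hsq]
  · rintro ctr R hR ⟨h1, h3⟩
    rw [Metric.mem_closedBall, dist_eq_norm] at h1 h3
    have t : ‖p₁ - p₃‖ ≤ ‖p₁ - ctr‖ + ‖ctr - p₃‖ :=
      norm_sub_le_norm_sub_add_norm_sub _ _ _
    have e : ‖ctr - p₃‖ = ‖p₃ - ctr‖ := norm_sub_rev _ _
    linarith
end

section
/- If three points p₁, p₂, p₃ in the Euclidean plane satisfy a² + b² ≤ c² (with a = ‖p₁−p₂‖, b = ‖p₂−p₃‖, c = ‖p₁−p₃‖, all positive and the points not collinear), then every closed ball containing p₁ and p₃ but not containing p₂ has radius at least the circumradius R = abc / (4√(σ(σ−a)(σ−b)(σ−c))), where σ = (a+b+c)/2. -/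
lemma core_ineq (C2 T2 Q2 PW QP QW L DD R : ℝ)
    (hC2 : 0 < C2)
    (id1 : C2*Q2 = QP^2 + L^2)
    (id2 : C2*QW = QP*PW + L*DD)
    (id3 : C2*T2 = PW^2 + DD^2)
    (f1 : Q2 + C2 - 2*QP ≤ 4*R^2)
    (f3 : Q2 + C2 + 2*QP ≤ 4*R^2)
    (f2 : 4*R^2 < Q2 + T2 - 2*QW)
    (hang : T2 ≤ C2) :
    L*DD < 0 ∧ ((C2-T2)^2 + 4*DD^2)*C2 ≤ 16*R^2*DD^2 := by
  have hPW2 : PW^2 ≤ C2^2 := by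
    nlinarith [sq_nonneg DD, mul_le_mul_of_nonneg_left hang hC2.le]
  have hPWl : -C2 ≤ PW := by nlinarith [sq_nonneg (PW + C2)]
  have hPWu : PW ≤ C2 := by nlinarith [sq_nonneg (PW - C2)]
  have hA : C2*(C2-T2) < -2*(L*DD) := by
    rcases le_or_gt 0 QP with hqp | hqp
    · have h' : 0 < T2 - 2*QW - C2 - 2*QP := by linarith
      nlinarith [mul_pos hC2 h', mul_nonneg hqp (by linarith : (0:ℝ) ≤ PW + C2)]
    · have h' : 0 < T2 - 2*QW - C2 + 2*QP := by linarith
      nlinarith [mul_pos hC2 h',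
        mul_nonneg (by linarith : (0:ℝ) ≤ -QP) (by linarith : (0:ℝ) ≤ C2 - PW)]
  have hu : 0 ≤ C2*(C2-T2) := mul_nonneg hC2.le (by linarith)
  have hLDD : L*DD < 0 := by nlinarith
  have hC : C2^2*(C2-T2)^2 ≤ 4*(L*DD)^2 := by
    nlinarith [mul_le_mul hA.le hA.le hu (by linarith : (0:ℝ) ≤ -2*(L*DD))]
  have hB : QP^2 + L^2 + C2^2 ≤ 4*C2*R^2 := by
    nlinarith [mul_le_mul_of_nonneg_left (show Q2 + C2 ≤ 4*R^2 by linarith) hC2.le]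
  refine ⟨hLDD, ?_⟩
  have h4 : 4*DD^2*(QP^2 + L^2 + C2^2) ≤ 4*DD^2*(4*C2*R^2) :=
    mul_le_mul_of_nonneg_left hB (by positivity)
  have hfin : C2 * (((C2-T2)^2 + 4*DD^2)*C2) ≤ C2 * (16*R^2*DD^2) := by
    nlinarith [h4, hC, mul_nonneg (sq_nonneg DD) (sq_nonneg QP)]
  exact le_of_mul_le_mul_left hfin hC2

lemma normsq (x y : EuclideanSpace ℝ (Fin 2)) :
    ‖x - y‖^2 = (x 0 - y 0)^2 + (x 1 - y 1)^2 := by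
  rw [← dist_eq_norm, EuclideanSpace.dist_eq, Fin.sum_univ_two,
    Real.sq_sqrt (by positivity), Real.dist_eq, Real.dist_eq, sq_abs, sq_abs]

set_option maxHeartbeats 1000000 in
/-- For a nondegenerate triangle in the plane with non-acute angle at `p₂`
(`a² + b² ≤ c²`), every closed ball containing `p₁` and `p₃` but not `p₂` has
radius at least the circumradius given by Heron's formula. -/
theorem stmt_8 (p₁ p₂ p₃ : EuclideanSpace ℝ (Fin 2))
    (hcol : ¬ Collinear ℝ ({p₁, p₂, p₃} : Set (EuclideanSpace ℝ (Fin 2))))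
    (a b c σ : ℝ) (ha : a = ‖p₁ - p₂‖) (hb : b = ‖p₂ - p₃‖) (hc : c = ‖p₁ - p₃‖)
    (hσ : σ = (a + b + c) / 2)
    (hangle : a ^ 2 + b ^ 2 ≤ c ^ 2) :
    ∀ (ctr : EuclideanSpace ℝ (Fin 2)) (R : ℝ),
      p₁ ∈ Metric.closedBall ctr R → p₃ ∈ Metric.closedBall ctr R →
      p₂ ∉ Metric.closedBall ctr R →
      a * b * c / (4 * Real.sqrt (σ * (σ - a) * (σ - b) * (σ - c))) ≤ R := by
  intro ctr R h1 h3 h2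
  have ha2 : a^2 = (p₁ 0 - p₂ 0)^2 + (p₁ 1 - p₂ 1)^2 := by rw [ha, normsq]
  have hb2 : b^2 = (p₂ 0 - p₃ 0)^2 + (p₂ 1 - p₃ 1)^2 := by rw [hb, normsq]
  have hc2 : c^2 = (p₁ 0 - p₃ 0)^2 + (p₁ 1 - p₃ 1)^2 := by rw [hc, normsq]
  have hd1 : (p₁ 0 - ctr 0)^2 + (p₁ 1 - ctr 1)^2 ≤ R^2 := by
    rw [← normsq]
    have := Metric.mem_closedBall.mp h1
    rw [dist_eq_norm] at this
    nlinarith [norm_nonneg (p₁ - ctr)]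
  have hd3 : (p₃ 0 - ctr 0)^2 + (p₃ 1 - ctr 1)^2 ≤ R^2 := by
    rw [← normsq]
    have := Metric.mem_closedBall.mp h3
    rw [dist_eq_norm] at this
    nlinarith [norm_nonneg (p₃ - ctr)]
  have hR0 : 0 ≤ R := le_trans dist_nonneg (Metric.mem_closedBall.mp h1)
  have hd2 : R^2 < (p₂ 0 - ctr 0)^2 + (p₂ 1 - ctr 1)^2 := by
    rw [← normsq]
    have h := lt_of_not_ge (fun hle => h2 (Metric.mem_closedBall.mpr hle))
    rw [dist_eq_norm] at h
    nlinarith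
  -- p₁ ≠ p₃
  have hne : p₁ ≠ p₃ := by
    intro h
    apply hcol
    rw [h]
    have : ({p₃, p₂, p₃} : Set (EuclideanSpace ℝ (Fin 2))) = {p₃, p₂} := by
      simp [Set.insert_comm, Set.pair_comm]
    rw [this]
    exact collinear_pair ℝ p₃ p₂
  have hcpos : 0 < c := by
    rw [hc]
    exact norm_pos_iff.mpr (sub_ne_zero.mpr hne)
  have hC2 : 0 < (p₁ 0 - p₃ 0)^2 + (p₁ 1 - p₃ 1)^2 := by
    rw [← hc2]; positivity
  -- instantiate the core inequality
  obtain ⟨hLDD, hmain⟩ := core_ineq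
    ((p₁ 0 - p₃ 0)^2+(p₁ 1 - p₃ 1)^2)
    ((2*p₂ 0 - p₁ 0 - p₃ 0)^2+(2*p₂ 1 - p₁ 1 - p₃ 1)^2)
    ((2*ctr 0 - p₁ 0 - p₃ 0)^2+(2*ctr 1 - p₁ 1 - p₃ 1)^2)
    ((p₁ 0 - p₃ 0)*(2*p₂ 0 - p₁ 0 - p₃ 0)+(p₁ 1 - p₃ 1)*(2*p₂ 1 - p₁ 1 - p₃ 1))
    ((p₁ 0 - p₃ 0)*(2*ctr 0 - p₁ 0 - p₃ 0)+(p₁ 1 - p₃ 1)*(2*ctr 1 - p₁ 1 - p₃ 1))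
    ((2*ctr 0 - p₁ 0 - p₃ 0)*(2*p₂ 0 - p₁ 0 - p₃ 0)+(2*ctr 1 - p₁ 1 - p₃ 1)*(2*p₂ 1 - p₁ 1 - p₃ 1))
    ((p₁ 0 - p₃ 0)*(2*ctr 1 - p₁ 1 - p₃ 1)-(p₁ 1 - p₃ 1)*(2*ctr 0 - p₁ 0 - p₃ 0))
    ((p₁ 0 - p₃ 0)*(2*p₂ 1 - p₁ 1 - p₃ 1)-(p₁ 1 - p₃ 1)*(2*p₂ 0 - p₁ 0 - p₃ 0))
    R hC2 (by ring) (by ring) (by ring)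
    (by linarith [hd1]) (by linarith [hd3]) (by linarith [hd2])
    (by linarith [ha2, hb2, hc2, hangle])
  set DD := (p₁ 0 - p₃ 0)*(2*p₂ 1 - p₁ 1 - p₃ 1)-(p₁ 1 - p₃ 1)*(2*p₂ 0 - p₁ 0 - p₃ 0) with hDD
  have hDDne : DD ≠ 0 := by
    intro h; rw [h] at hLDD; simp at hLDD
  have hDDpos : 0 < |DD| := abs_pos.mpr hDDne
  -- Heron expression equals (DD/4)^2
  have hE : σ * (σ - a) * (σ - b) * (σ - c) = (DD/4)^2 := by
    have h16 : 16*(σ * (σ - a) * (σ - b) * (σ - c))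
        = 4*a^2*b^2 - (a^2+b^2-c^2)^2 := by rw [hσ]; ring
    have h2' : 4*a^2*b^2 - (a^2+b^2-c^2)^2 = 16*(DD/4)^2 := by
      rw [ha2, hb2, hc2, hDD]; ring
    linarith [h16, h2']
  have hS : Real.sqrt (σ * (σ - a) * (σ - b) * (σ - c)) = |DD|/4 := by
    rw [hE, Real.sqrt_sq_eq_abs, abs_div]
    norm_num
  rw [hS]
  have h4 : 4*(|DD|/4) = |DD| := by ring
  rw [h4, div_le_iff₀ hDDpos]
  -- final squaring
  have habc : 0 ≤ a*b*c := by
    rw [ha, hb, hc]; positivity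
  have hsq : (a*b*c)^2 ≤ (R*|DD|)^2 := by
    have e1 : (R*|DD|)^2 = R^2*DD^2 := by rw [mul_pow, sq_abs]
    have e2 : (a*b*c)^2 = a^2*b^2*c^2 := by ring
    rw [e1, e2, ha2, hb2, hc2]
    simp only [hDD] at hmain ⊢
    linarith [hmain]
  calc a*b*c = Real.sqrt ((a*b*c)^2) := (Real.sqrt_sq habc).symm
    _ ≤ Real.sqrt ((R*|DD|)^2) := Real.sqrt_le_sqrt hsq
    _ = R*|DD| := Real.sqrt_sq (by positivity)
end

section
/- A scalar sequence p₁,…,p_n is monotone (nondecreasing or nonincreasing) if and only if for every closed interval [a,b], the index set {i : p_i ∈ [a,b]} is a set of consecutive integers. -/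
/-- A scalar sequence is monotone (nondecreasing or nonincreasing) iff for every
closed interval, the index set of values lying in it is a set of consecutive
indices. -/
theorem stmt_14 (n : ℕ) (p : Fin n → ℝ) :
    (Monotone p ∨ Antitone p) ↔
      ∀ a b : ℝ, a ≤ b → ∀ i j k : Fin n, i ≤ j → j ≤ k →
        p i ∈ Set.Icc a b → p k ∈ Set.Icc a b → p j ∈ Set.Icc a b := by
  constructor
  · rintro (hm | ha) a b _ i j k hij hjk ⟨hi1, hi2⟩ ⟨hk1, hk2⟩
    · exact ⟨hi1.trans (hm hij), (hm hjk).trans hk2⟩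
    · exact ⟨hk1.trans (ha hjk), (ha hij).trans hi2⟩
  · intro h
    by_contra hc
    push_neg at hc
    obtain ⟨i, j, k, hij, hjk, hcase⟩ :=
      not_monotone_not_antitone_iff_exists_le_le.mp hc
    have hi : p i ∈ Set.Icc (min (p i) (p k)) (max (p i) (p k)) :=
      ⟨min_le_left _ _, le_max_left _ _⟩
    have hk : p k ∈ Set.Icc (min (p i) (p k)) (max (p i) (p k)) :=
      ⟨min_le_right _ _, le_max_right _ _⟩
    have hj := h _ _ (min_le_of_left_le (le_max_left _ _)) i j k hij hjk hi hk
    rcases hcase with ⟨h1, h2⟩ | ⟨h1, h2⟩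
    · exact absurd hj.2 (not_le.mpr (max_lt h1 h2))
    · exact absurd hj.1 (not_le.mpr (lt_min h1 h2))
end

section
/- If p₁, p₂, p₃ ∈ ℝⁿ are such that for every closed ball B (of arbitrary radius) the set {i ∈ {1,2,3} : p_i ∈ B} is consecutive, then p₂ lies on the segment [p₁, p₃]. -/
/-- If every closed ball containing `p₁` and `p₃` also contains `p₂`, then `p₂`
lies on the segment from `p₁` to `p₃`. -/
theorem stmt_16 {E : Type*} [NormedAddCommGroup E] [InnerProductSpace ℝ E]
    (p₁ p₂ p₃ : E)
    (h : ∀ (c : E) (R : ℝ), 0 ≤ R → p₁ ∈ Metric.closedBall c R →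
      p₃ ∈ Metric.closedBall c R → p₂ ∈ Metric.closedBall c R) :
    p₂ ∈ segment ℝ p₁ p₃ := by
  set a : E := p₃ - p₁ with ha
  set b : E := p₂ - p₁ with hb
  have h' : ∀ c : E, ‖b - c‖ ≤ max ‖c‖ ‖a - c‖ := by
    intro c
    have hR : (0:ℝ) ≤ max ‖c‖ ‖a - c‖ := le_trans (norm_nonneg c) (le_max_left _ _)
    have h1 : p₁ ∈ Metric.closedBall (c + p₁) (max ‖c‖ ‖a - c‖) := by
      have : p₁ - (c + p₁) = -c := by abel
      simp [Metric.mem_closedBall, dist_eq_norm, this]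
    have h3 : p₃ ∈ Metric.closedBall (c + p₁) (max ‖c‖ ‖a - c‖) := by
      have : p₃ - (c + p₁) = a - c := by rw [ha]; abel
      simp [Metric.mem_closedBall, dist_eq_norm, this]
    have h2 := h (c + p₁) _ hR h1 h3
    have he : p₂ - (c + p₁) = b - c := by rw [hb]; abel
    simpa [Metric.mem_closedBall, dist_eq_norm, he] using h2
  by_cases haz : a = 0
  · have h0 := h' 0
    simp [haz] at h0
    have : b = 0 := by simpa using h0
    have hp : p₂ = p₁ := by
      have := sub_eq_zero.mp (hb ▸ this)
      exact this
    rw [hp]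
    exact left_mem_segment ℝ p₁ p₃
  · have hna : (0:ℝ) < ‖a‖ := norm_pos_iff.mpr haz
    set s : ℝ := inner ℝ a b / ‖a‖ ^ 2 with hs
    set w : E := b - s • a with hwdef
    have hw : (inner ℝ a w : ℝ) = 0 := by
      rw [hwdef, inner_sub_right, real_inner_smul_right, real_inner_self_eq_norm_sq, hs]
      field_simp
      ring
    have hbw : b = s • a + w := by rw [hwdef]; abel
    -- key squared inequality with center t • w
    have key : ∀ t : ℝ, (1 - 2*t) * ‖w‖^2 ≤ (1 - s^2) * ‖a‖^2 := by
      intro t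
      have hiw : (inner ℝ a (t • w) : ℝ) = 0 := by
        rw [real_inner_smul_right, hw]; ring
      have hna2 : ‖a - t • w‖^2 = ‖a‖^2 + t^2 * ‖w‖^2 := by
        rw [norm_sub_sq_real, hiw, norm_smul]
        simp only [Real.norm_eq_abs, mul_pow, sq_abs]
        ring
      have hmax : ‖t • w‖ ≤ ‖a - t • w‖ := by
        have h1 : ‖t • w‖^2 ≤ ‖a - t • w‖^2 := by
          rw [hna2, norm_smul]
          simp only [Real.norm_eq_abs, mul_pow, sq_abs]
          nlinarith [sq_nonneg ‖a‖]
        exact (pow_le_pow_iff_left₀ (norm_nonneg _) (norm_nonneg _) two_ne_zero).mp h1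
      have hle : ‖b - t • w‖ ≤ ‖a - t • w‖ := (h' (t • w)).trans (max_le hmax le_rfl)
      have hsq : ‖b - t • w‖^2 ≤ ‖a - t • w‖^2 := by
        exact pow_le_pow_left₀ (norm_nonneg _) hle 2
      have hbformula : b - t • w = s • a + (1 - t) • w := by
        rw [hbw]; rw [sub_smul, one_smul]; abel
      have hbsq : ‖b - t • w‖^2 = s^2 * ‖a‖^2 + (1-t)^2 * ‖w‖^2 := by
        rw [hbformula, norm_add_sq_real, real_inner_smul_left, real_inner_smul_right, hw,
          norm_smul, norm_smul]
        simp only [Real.norm_eq_abs, mul_pow, sq_abs]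
        ring
      rw [hbsq, hna2] at hsq
      nlinarith [hsq]
    have hw0 : w = 0 := by
      by_contra hwne
      have hwp : (0:ℝ) < ‖w‖^2 := pow_pos (norm_pos_iff.mpr hwne) 2
      set K : ℝ := (1 - s^2) * ‖a‖^2 with hK
      set t : ℝ := -(K / (2 * ‖w‖^2)) with ht
      have hkey := key t
      have heq : (1 - 2*t) * ‖w‖^2 = ‖w‖^2 + K := by
        rw [ht]; field_simp; ring
      rw [heq] at hkey
      linarith
    have hba : b = s • a := by rw [hbw, hw0, add_zero]
    -- bounds on s
    have hbound : ∀ t : ℝ, |s - t| ≤ max |t| |1 - t| := by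
      intro t
      have := h' (t • a)
      have h1 : b - t • a = (s - t) • a := by rw [hba, sub_smul]
      have h2 : a - t • a = (1 - t) • a := by rw [sub_smul, one_smul]
      rw [h1, h2, norm_smul, norm_smul, norm_smul] at this
      simp only [Real.norm_eq_abs] at this
      have hmax : max (|t| * ‖a‖) (|1 - t| * ‖a‖) = max |t| |1 - t| * ‖a‖ := by
        rw [max_mul_of_nonneg _ _ (norm_nonneg a)]
      rw [hmax] at this
      exact le_of_mul_le_mul_right this hna
    have hs1 : s ≤ 1 := by
      have h1 := hbound (-1)
      rw [show |(-1:ℝ)| = 1 by norm_num, show |1 - (-1:ℝ)| = 2 by norm_num,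
        max_eq_right (by norm_num : (1:ℝ) ≤ 2)] at h1
      have := (abs_le.mp h1).2
      linarith
    have hs0 : 0 ≤ s := by
      have h1 := hbound 2
      rw [show |(2:ℝ)| = 2 by norm_num, show |1 - (2:ℝ)| = 1 by norm_num,
        max_eq_left (by norm_num : (1:ℝ) ≤ 2)] at h1
      have := (abs_le.mp h1).1
      linarith
    rw [segment_eq_image']
    refine ⟨s, ⟨hs0, hs1⟩, ?_⟩
    show p₁ + s • (p₃ - p₁) = p₂
    rw [← ha, ← hba, hb]
    abel
end

section
/- In a real inner product space, the intersection of all closed balls containing two points p and q equals the closed segment [p, q]. -/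
/-!
If `x` lies in every closed ball containing `p` and `q`, first take the balls through `p` and `q`
centred at `midpoint ℝ p q + t • u` with `u ⊥ q - p`: as `t → ±∞` they tend to the two half-spaces
bounded by the hyperplane through `p` orthogonal to `u`, so `⟪x - p, u⟫ = 0`. Hence `x - p` lies in
`(ℝ ∙ (q - p))ᗮᗮ = ℝ ∙ (q - p)`, i.e. `x` is on the line `pq`. The balls of radius `dist p q`
centred at `p` and at `q` then cut this line down to the segment.
-/

open RealInnerProductSpace

lemma eq_zero_of_forall_le_mul {a b : ℝ} (h : ∀ t : ℝ, a ≤ t * b) : b = 0 := by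
  by_contra hb
  have := h ((a - 1) / b)
  rw [div_mul_cancel₀ _ hb] at this
  linarith

section

variable {E : Type*} [NormedAddCommGroup E] [InnerProductSpace ℝ E] {p q x : E}

lemma inner_sub_eq_zero_of_forall_dist_le
    (hx : ∀ c R, dist p c ≤ R → dist q c ≤ R → dist x c ≤ R) {u : E} (hu : ⟪q - p, u⟫ = 0) :
    ⟪x - p, u⟫ = 0 := by
  suffices h : 2 * ⟪x - p, u⟫ = 0 by linarith
  refine eq_zero_of_forall_le_mul (a := ‖x - p‖ ^ 2 + 2 * ⟪x - p, p - midpoint ℝ p q⟫) fun t ↦ ?_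
  set c := midpoint ℝ p q + t • u
  have hc : dist p c = dist q c := by
    refine AffineSubspace.mem_perpBisector_iff_dist_eq'.mp ?_
    rw [AffineSubspace.mem_perpBisector_iff_inner_eq_zero']
    simp [c, inner_smul_right, hu]
  have hxc : ‖(x - p) + (p - c)‖ ≤ ‖p - c‖ := by
    simpa [dist_eq_norm] using hx c (dist p c) le_rfl hc.ge
  have hpc : p - c = (p - midpoint ℝ p q) - t • u := by simp only [c]; abel
  have := pow_le_pow_left₀ (norm_nonneg _) hxc 2
  rw [norm_add_sq_real, hpc, inner_sub_right, real_inner_smul_right] at this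
  linarith

lemma sub_mem_span_of_forall_dist_le
    (hx : ∀ c R, dist p c ≤ R → dist q c ≤ R → dist x c ≤ R) :
    x - p ∈ ℝ ∙ (q - p) := by
  rw [← Submodule.orthogonal_orthogonal (ℝ ∙ (q - p)), Submodule.mem_orthogonal']
  intro u hu
  exact inner_sub_eq_zero_of_forall_dist_le hx
    (Submodule.mem_orthogonal_singleton_iff_inner_right.mp hu)

end

lemma mem_segment_of_sub_mem_span_of_dist_le {E : Type*} [NormedAddCommGroup E]
    [NormedSpace ℝ E] {p q x : E} (hx : x - p ∈ ℝ ∙ (q - p)) (hp : dist x p ≤ dist p q)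
    (hq : dist x q ≤ dist p q) : x ∈ segment ℝ p q := by
  obtain ⟨s, hs⟩ := Submodule.mem_span_singleton.mp hx
  rcases eq_or_ne p q with rfl | hpq
  · rw [sub_self, smul_zero, eq_comm, sub_eq_zero] at hs
    simp [hs]
  have hd : 0 < ‖q - p‖ := norm_pos_iff.mpr (sub_ne_zero.mpr hpq.symm)
  have hxq : x - q = (s - 1) • (q - p) := by rw [sub_smul, one_smul, hs]; abel
  rw [dist_eq_norm, ← hs, norm_smul, dist_eq_norm', Real.norm_eq_abs] at hp
  rw [dist_eq_norm, hxq, norm_smul, dist_eq_norm', Real.norm_eq_abs] at hq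
  have hs1 : |s| ≤ 1 := le_of_mul_le_mul_right (by linarith) hd
  have hs0 : |s - 1| ≤ 1 := le_of_mul_le_mul_right (by linarith) hd
  rw [segment_eq_image']
  exact ⟨s, ⟨by linarith [abs_le.mp hs0], (abs_le.mp hs1).2⟩, by simp only [hs]; abel⟩

/-- In a real inner product space, the intersection of all closed balls containing
two points `p` and `q` equals the segment `[p, q]`. -/
theorem stmt_17 {E : Type*} [NormedAddCommGroup E] [InnerProductSpace ℝ E]
    (p q : E) :
    ⋂₀ {B : Set E | ∃ (c : E) (R : ℝ), 0 ≤ R ∧ B = Metric.closedBall c R ∧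
        p ∈ B ∧ q ∈ B} = segment ℝ p q := by
  apply Set.Subset.antisymm
  · intro x hx
    have hball : ∀ c R, dist p c ≤ R → dist q c ≤ R → dist x c ≤ R := fun c R hp hq ↦
      hx _ ⟨c, R, dist_nonneg.trans hp, rfl, hp, hq⟩
    exact mem_segment_of_sub_mem_span_of_dist_le (sub_mem_span_of_forall_dist_le hball)
      (hball p _ (by simp) (dist_comm q p).le)
      (hball q _ le_rfl (by simp))
  · rintro x hx B ⟨c, R, -, rfl, hp, hq⟩
    exact (convex_closedBall c R).segment_subset hp hq hx
end
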